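/- Let T > 0, E₀ ≥ 0, C ≥ 0, and let (εₙ) be a sequence of positive reals with εₙ → 0. For every n let φₙ : [0,T] × ℝ² → ℝ be such that for each t, φₙ(t,·) is three times continuously differentiable and ℤ²-periodic in x, and set ρₙ(t,x) = det(I + εₙ·D²ₓφₙ(t,x)). Assume uniformly in t ∈ [0,T]: εₙ·∫_{[0,1]²}|∇ₓφₙ(t,x)|² dx ≤ 2E₀ and (∫_{[0,1]²}‖cof D²ₓφₙ(t,x)‖² dx)^{1/2} ≤ C·εₙ^{−1/2}. Then for every smooth ℤ²-periodic η : ℝ² → ℝ, sup_{t∈[0,T]} |∫_{[0,1]²}(ρₙ(t,x) − 1)·η(x) dx| → 0 as n → ∞. -/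

import Mathlib

open MeasureTheory Filter

/-- Partial derivative in the `i`-th coordinate direction of `f : ℝ² → ℝ`. -/
noncomputable def pd (i : Fin 2) (f : (Fin 2 → ℝ) → ℝ) (x : Fin 2 → ℝ) : ℝ :=
  fderiv ℝ f x (Pi.single i 1)

lemma contDiff_pd {m n : ℕ} (i : Fin 2) (f : (Fin 2 → ℝ) → ℝ)
    (hf : ContDiff ℝ n f) (h : m + 1 ≤ n) : ContDiff ℝ m (pd i f) :=
  (hf.fderiv_right (by exact_mod_cast h)).clm_apply contDiff_const

set_option maxHeartbeats 1000000 in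
/-- Lemma 1, first assertion: if `εₙ → 0`, each `φₙ(t,·)` is `C³` and `ℤ²`-periodic,
`ρₙ = det(I + εₙ D²ₓφₙ)`, and uniformly in `t ∈ [0,T]` the energy bound
`εₙ ∫ |∇ₓφₙ|² ≤ 2E₀` and the regularity bound `(∫ ‖cof D²ₓφₙ‖²)^{1/2} ≤ C εₙ^{-1/2}` hold,
then for every smooth `ℤ²`-periodic test function `η`,
`sup_{t ∈ [0,T]} |∫ (ρₙ(t,·) − 1) η| → 0`, i.e. `ρₙ → 1` in `C⁰([0,T], 𝒟'(𝕋²))`. -/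
theorem density_tendsto_one_in_C0_D'
    (T E₀ C : ℝ) (hT : 0 < T) (hE₀ : 0 ≤ E₀) (hC : 0 ≤ C)
    (ε : ℕ → ℝ) (hε : ∀ n, 0 < ε n) (hε0 : Tendsto ε atTop (nhds 0))
    (φ : ℕ → ℝ → (Fin 2 → ℝ) → ℝ)
    (hφ : ∀ n, ∀ t ∈ Set.Icc (0 : ℝ) T, ContDiff ℝ 3 (φ n t))
    (hφper : ∀ n, ∀ t ∈ Set.Icc (0 : ℝ) T, ∀ (x : Fin 2 → ℝ) (k : Fin 2 → ℤ),
      φ n t (x + fun i => (k i : ℝ)) = φ n t x)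
    (ρ : ℕ → ℝ → (Fin 2 → ℝ) → ℝ)
    (hρ : ∀ n t x, ρ n t x =
      Matrix.det ((1 : Matrix (Fin 2) (Fin 2) ℝ) +
        ε n • Matrix.of fun i j => pd i (pd j (φ n t)) x))
    (henergy : ∀ n, ∀ t ∈ Set.Icc (0 : ℝ) T,
      ε n * ∫ x in Set.Icc (0 : Fin 2 → ℝ) 1, ∑ i, (pd i (φ n t) x) ^ 2 ≤ 2 * E₀)
    (hreg : ∀ n, ∀ t ∈ Set.Icc (0 : ℝ) T,
      Real.sqrt (∫ x in Set.Icc (0 : Fin 2 → ℝ) 1,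
        ((pd 1 (pd 1 (φ n t)) x) ^ 2 + (-(pd 0 (pd 1 (φ n t)) x)) ^ 2 +
          (-(pd 1 (pd 0 (φ n t)) x)) ^ 2 + (pd 0 (pd 0 (φ n t)) x) ^ 2)) ≤
        C * (ε n) ^ (-(1 / 2 : ℝ)))
    (η : (Fin 2 → ℝ) → ℝ) (hη : ContDiff ℝ (⊤ : ℕ∞) η)
    (hηper : ∀ (x : Fin 2 → ℝ) (k : Fin 2 → ℤ), η (x + fun i => (k i : ℝ)) = η x) :
    Tendsto (fun n => ⨆ t : Set.Icc (0 : ℝ) T,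
      |∫ x in Set.Icc (0 : Fin 2 → ℝ) 1, (ρ n (t : ℝ) x - 1) * η x|) atTop (nhds 0) := by
  classical
  set K := Set.Icc (0 : Fin 2 → ℝ) 1 with hKdef
  have hKc : IsCompact K := isCompact_Icc
  obtain ⟨M₀, hM₀⟩ := hKc.exists_bound_of_continuousOn hη.continuous.continuousOn
  set M := max M₀ 0 with hMdef
  have hM : ∀ x ∈ K, |η x| ≤ M := fun x hx =>
    le_trans (by simpa using hM₀ x hx) (le_max_left _ _)
  have hM0 : (0 : ℝ) ≤ M := le_max_right _ _
  set s : ℕ → ℝ := fun n => Real.sqrt (ε n) with hsdef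
  set b : ℕ → ℝ := fun n => M * ((s n + s n * s n) * C ^ 2 / 2 + s n) with hbdef
  have key : ∀ n, ∀ t ∈ Set.Icc (0 : ℝ) T,
      |∫ x in K, (ρ n t x - 1) * η x| ≤ b n := by
    intro n t ht
    have hsn : 0 < s n := Real.sqrt_pos.mpr (hε n)
    have hs2 : s n * s n = ε n := Real.mul_self_sqrt (hε n).le
    set A := pd 0 (pd 0 (φ n t)) with hA
    set B := pd 0 (pd 1 (φ n t)) with hB
    set Cc := pd 1 (pd 0 (φ n t)) with hCc
    set D := pd 1 (pd 1 (φ n t)) with hD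
    set S : (Fin 2 → ℝ) → ℝ :=
      fun x => (D x) ^ 2 + (-(B x)) ^ 2 + (-(Cc x)) ^ 2 + (A x) ^ 2 with hSdef
    -- continuity of second partials
    have hcA : Continuous A :=
      (contDiff_pd (m := 1) 0 _ (contDiff_pd (m := 2) 0 _ (hφ n t ht) (by norm_num))
        (by norm_num)).continuous
    have hcB : Continuous B :=
      (contDiff_pd (m := 1) 0 _ (contDiff_pd (m := 2) 1 _ (hφ n t ht) (by norm_num))
        (by norm_num)).continuous
    have hcC : Continuous Cc :=
      (contDiff_pd (m := 1) 1 _ (contDiff_pd (m := 2) 0 _ (hφ n t ht) (by norm_num))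
        (by norm_num)).continuous
    have hcD : Continuous D :=
      (contDiff_pd (m := 1) 1 _ (contDiff_pd (m := 2) 1 _ (hφ n t ht) (by norm_num))
        (by norm_num)).continuous
    have hcS : Continuous S := by fun_prop
    -- pointwise identity
    have hρx : ∀ x, ρ n t x - 1 =
        (s n * s n) * (A x + D x) +
          ((s n * s n) * (s n * s n)) * (A x * D x - B x * Cc x) := by
      intro x
      rw [hρ, Matrix.det_fin_two]
      simp only [Matrix.add_apply, Matrix.smul_apply, Matrix.of_apply, smul_eq_mul,
        Matrix.one_apply_eq, Matrix.one_apply_ne (by decide : (0 : Fin 2) ≠ 1),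
        Matrix.one_apply_ne (by decide : (1 : Fin 2) ≠ 0), hs2]
      rw [← hA, ← hB, ← hCc, ← hD]
      ring
    -- continuity of ρ
    have hcρ : Continuous (fun x => (ρ n t x - 1) * η x) := by
      have : (fun x => ρ n t x - 1) = fun x =>
          (s n * s n) * (A x + D x) +
            ((s n * s n) * (s n * s n)) * (A x * D x - B x * Cc x) :=
        funext fun x => hρx x
      exact ((continuous_const.mul (hcA.add hcD)).add
        (continuous_const.mul ((hcA.mul hcD).sub (hcB.mul hcC)))).mul hη.continuous
        |>.congr (by intro x; simp only [Pi.mul_apply, Pi.add_apply, Pi.sub_apply]; rw [hρx x])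
    -- pointwise bound
    have hpt : ∀ x ∈ K, |(ρ n t x - 1) * η x| ≤
        M * ((s n ^ 3 + s n ^ 4) / 2 * S x + s n) := by
      intro x hx
      have hS0 : 0 ≤ S x := by positivity
      have h1 : |ρ n t x - 1| ≤ (s n ^ 3 + s n ^ 4) / 2 * S x + s n := by
        rw [hρx x, abs_le]
        constructor <;>
          nlinarith [mul_nonneg hsn.le (sq_nonneg (s n * A x - 1)),
            mul_nonneg hsn.le (sq_nonneg (s n * A x + 1)),
            mul_nonneg hsn.le (sq_nonneg (s n * D x - 1)),
            mul_nonneg hsn.le (sq_nonneg (s n * D x + 1)),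
            mul_nonneg (pow_nonneg hsn.le 4) (sq_nonneg (A x - D x)),
            mul_nonneg (pow_nonneg hsn.le 4) (sq_nonneg (A x + D x)),
            mul_nonneg (pow_nonneg hsn.le 4) (sq_nonneg (B x - Cc x)),
            mul_nonneg (pow_nonneg hsn.le 4) (sq_nonneg (B x + Cc x)),
            mul_nonneg (pow_nonneg hsn.le 3) (sq_nonneg (B x)),
            mul_nonneg (pow_nonneg hsn.le 3) (sq_nonneg (Cc x))]
      calc |(ρ n t x - 1) * η x| = |ρ n t x - 1| * |η x| := abs_mul _ _
        _ ≤ ((s n ^ 3 + s n ^ 4) / 2 * S x + s n) * M := by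
            apply mul_le_mul h1 (hM x hx) (abs_nonneg _)
            positivity
        _ = M * ((s n ^ 3 + s n ^ 4) / 2 * S x + s n) := by ring
    -- the L² bound on S
    set J := ∫ x in K, S x with hJdef
    have hJ0 : 0 ≤ J := setIntegral_nonneg measurableSet_Icc (fun x _ => by positivity)
    have hJ : ε n * J ≤ C ^ 2 := by
      have h := hreg n t ht
      have hrw : (ε n) ^ (-(1 / 2 : ℝ)) = (s n)⁻¹ := by
        rw [Real.rpow_neg (hε n).le, ← Real.sqrt_eq_rpow]
      rw [hrw] at h
      have h2 : s n * Real.sqrt J ≤ C := by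
        calc s n * Real.sqrt J ≤ s n * (C * (s n)⁻¹) :=
              mul_le_mul_of_nonneg_left h hsn.le
          _ = C := by field_simp
      nlinarith [Real.sq_sqrt hJ0, Real.sqrt_nonneg J, hs2,
        mul_nonneg hsn.le (Real.sqrt_nonneg J)]
    -- integrability
    have hint1 : IntegrableOn (fun x => (ρ n t x - 1) * η x) K :=
      hcρ.continuousOn.integrableOn_compact hKc
    have hint2 : IntegrableOn (fun x => M * ((s n ^ 3 + s n ^ 4) / 2 * S x + s n)) K := by
      apply ContinuousOn.integrableOn_compact hKc
      exact (continuous_const.mul ((continuous_const.mul hcS).add continuous_const)).continuousOn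
    have hvol : (volume K).toReal = 1 := by
      rw [hKdef, Real.volume_Icc_pi]
      simp
    have hSint : IntegrableOn S K := hcS.continuousOn.integrableOn_compact hKc
    calc |∫ x in K, (ρ n t x - 1) * η x|
        ≤ ∫ x in K, |(ρ n t x - 1) * η x| := by
          simpa only [Real.norm_eq_abs] using norm_integral_le_integral_norm
            (μ := volume.restrict K) (fun x => (ρ n t x - 1) * η x)
      _ ≤ ∫ x in K, M * ((s n ^ 3 + s n ^ 4) / 2 * S x + s n) :=
          setIntegral_mono_on hint1.abs hint2 measurableSet_Icc hpt
      _ = M * ((s n ^ 3 + s n ^ 4) / 2 * J + s n) := by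
          rw [integral_const_mul, integral_add ((hSint.const_mul _))
            (integrableOn_const hKc.measure_lt_top.ne)]
          rw [integral_const_mul, setIntegral_const, measureReal_def, hvol]
          simp [hJdef]
      _ ≤ b n := by
          rw [hbdef]
          have h3 : (s n ^ 3 + s n ^ 4) / 2 * J ≤ (s n + s n * s n) * C ^ 2 / 2 := by
            have h4 : (s n + s n * s n) * (ε n * J) ≤ (s n + s n * s n) * C ^ 2 :=
              mul_le_mul_of_nonneg_left hJ (by positivity)
            rw [← hs2] at h4
            nlinarith [h4]
          have := add_le_add_left h3 (s n)
          exact mul_le_mul_of_nonneg_left this hM0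
  -- conclude by squeezing
  haveI : Nonempty (Set.Icc (0 : ℝ) T) := ⟨⟨0, le_refl 0, hT.le⟩⟩
  have hs0 : Tendsto s atTop (nhds 0) := by
    have := (Real.continuous_sqrt.tendsto 0).comp hε0
    simpa [hsdef, Function.comp_def] using this
  have hb0 : Tendsto b atTop (nhds 0) := by
    have : Tendsto b atTop (nhds (M * ((0 + 0 * 0) * C ^ 2 / 2 + 0))) := by
      apply Tendsto.const_mul
      exact (((hs0.add (hs0.mul hs0)).mul_const _).div_const _).add hs0
    simpa using this
  apply squeeze_zero (g := b) _ _ hb0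
  · intro n
    exact Real.iSup_nonneg fun t => abs_nonneg _
  · intro n
    exact ciSup_le fun t => key n t t.2
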